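/- arXiv:1210.6527 — 2 statements merged into one kernel-verified Lean document; each statement's English description precedes it below -/
import Mathlib

section
/- Let A be an integer matrix with columns a₁,…,a_m ∈ ℤ^n, and suppose the cone C(A) := ∑_i ℝ≥0·a_i can be written as a finite union of cones C_j, where each C_j is generated by a subset of the columns of A which forms part of a ℤ-basis of ℤ^n. Then the semigroup ℕA := ∑_i ℕ·a_i is saturated, i.e. ℕA = C(A) ∩ ℤ^n. -/
/-!
The real images of a `ℤ`-basis of `ℤ^n` form an `ℝ`-basis of `ℝ^n` (its determinant is `±1`).
If an integer point `x` lies in a smooth cone spanned by some of the basis vectors `b k`, then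
its real cone coefficients are its coordinates in that real basis, which are the integer
coordinates of `x` in `b`; being nonnegative integers, they exhibit `x ∈ ℕA`. Since the smooth
cones cover `C(A)`, every lattice point of `C(A)` lies in `ℕA`.
-/

namespace Module.Basis

variable {ι : Type*} [Fintype ι] [DecidableEq ι] (R : Type*) [CommRing R]

theorem isUnit_det_intCast (b : Basis ι ℤ (ι → ℤ)) :
    IsUnit ((Pi.basisFun R ι).det fun k j => (b k j : R)) := by
  have h := ((Pi.basisFun ℤ ι).is_basis_iff_det.mp ⟨b.linearIndependent, b.span_eq⟩).map
    (Int.castRingHom R)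
  rw [det_apply, RingHom.map_det] at h
  rw [det_apply]
  convert h using 2
  ext i j
  simp [Module.Basis.toMatrix_apply]

noncomputable def intCast (b : Basis ι ℤ (ι → ℤ)) : Basis ι R (ι → R) :=
  have h := (Pi.basisFun R ι).is_basis_iff_det.mpr (isUnit_det_intCast R b)
  .mk h.1 h.2.ge

@[simp]
theorem intCast_apply (b : Basis ι ℤ (ι → ℤ)) (k : ι) :
    b.intCast R k = fun j => (b k j : R) := by
  rw [intCast, mk_apply]

theorem intCast_repr_intCast (b : Basis ι ℤ (ι → ℤ)) (x : ι → ℤ) (k : ι) :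
    (b.intCast R).repr (fun j => (x j : R)) k = b.repr x k := by
  have hx : (fun j => (x j : R)) = ∑ l, (b.repr x l : R) • b.intCast R l := by
    conv_lhs => rw [← b.sum_repr x]
    ext j
    simp [Finset.sum_apply]
  rw [hx, repr_sum_self]

end Module.Basis

variable {ι κ : Type*} [Fintype ι] [DecidableEq ι] [Fintype κ]

theorem coeff_eq_repr_of_eq_sum_smul {R : Type*} [CommRing R] (a : κ → ι → ℤ) (b : Module.Basis ι ℤ (ι → ℤ))
    (s : Finset κ) (e : s → ι) (he : Function.Injective e) (hb : ∀ i, b (e i) = a i)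
    (c : κ → R) (hc : ∀ i ∉ s, c i = 0) (x : ι → ℤ)
    (hx : (fun j => (x j : R)) = ∑ i, c i • fun j => (a i j : R)) (i : s) :
    c i = b.repr x (e i) := by
  have hrepr : ∀ l : s, (b.intCast R).repr (fun j => (a l j : R)) = Finsupp.single (e l) 1 := by
    intro l
    rw [← hb, ← Module.Basis.intCast_apply, Module.Basis.repr_self]
  rw [← Module.Basis.intCast_repr_intCast R, hx, map_sum, Finsupp.finsetSum_apply,
    Finset.sum_eq_single (i : κ)]
  · simp [hrepr]
  · intro l _ hli
    by_cases hl : l ∈ s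
    · have : e i ≠ e ⟨l, hl⟩ := he.ne fun h => hli (congrArg Subtype.val h).symm
      simp [hrepr ⟨l, hl⟩, Finsupp.single_eq_of_ne this]
    · simp [hc l hl]
  · simp

theorem exists_nat_coeffs_of_eq_sum_smul {R : Type*} [CommRing R] [LinearOrder R]
    [IsStrictOrderedRing R] (a : κ → ι → ℤ) (b : Module.Basis ι ℤ (ι → ℤ))
    (s : Finset κ) (e : s → ι) (he : Function.Injective e) (hb : ∀ i, b (e i) = a i)
    (c : κ → R) (hc₀ : ∀ i, 0 ≤ c i) (hc : ∀ i ∉ s, c i = 0) (x : ι → ℤ)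
    (hx : (fun j => (x j : R)) = ∑ i, c i • fun j => (a i j : R)) :
    ∃ μ : κ → ℕ, x = ∑ i, μ i • a i := by
  have hnat : ∀ i, ∃ N : ℕ, c i = N := by
    intro i
    by_cases hi : i ∈ s
    · have hci := coeff_eq_repr_of_eq_sum_smul a b s e he hb c hc x hx ⟨i, hi⟩
      refine ⟨(b.repr x (e ⟨i, hi⟩)).toNat, ?_⟩
      have : 0 ≤ b.repr x (e ⟨i, hi⟩) := by exact_mod_cast hci ▸ hc₀ i
      rw [hci, ← Int.cast_natCast, Int.toNat_of_nonneg this]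
    · exact ⟨0, by simp [hc i hi]⟩
  choose μ hμ using hnat
  refine ⟨μ, funext fun j => Int.cast_injective (α := R) ?_⟩
  simpa [hμ, Finset.sum_apply] using congrFun hx j

/-- if the cone generated by the columns of `A` is a finite union of cones,
each generated by a subset of the columns forming part of a `ℤ`-basis of `ℤ^n`, then the
semigroup `ℕA` is saturated: `ℕA = C(A) ∩ ℤ^n`. -/
theorem semigroup_saturated_of_smooth_cover (n m : ℕ)
    (a : Fin m → (Fin n → ℤ))
    (coneOf : Finset (Fin m) → Set (Fin n → ℝ))
    (hconeOf : ∀ s, coneOf s = {v | ∃ lam : Fin m → ℝ, (∀ i, 0 ≤ lam i) ∧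
      (∀ i ∉ s, lam i = 0) ∧ v = ∑ i : Fin m, lam i • (fun j => (a i j : ℝ))})
    (F : Finset (Finset (Fin m)))
    (hsmooth : ∀ s ∈ F, ∃ (bas : Module.Basis (Fin n) ℤ (Fin n → ℤ)) (ι : {i // i ∈ s} → Fin n),
      Function.Injective ι ∧ ∀ i : {i // i ∈ s}, bas (ι i) = a i.val)
    (hcover : coneOf Finset.univ = ⋃ s ∈ F, coneOf s) :
    ∀ x : Fin n → ℤ,
      ((fun j => (x j : ℝ)) ∈ coneOf Finset.univ) ↔
      (∃ mu : Fin m → ℕ, x = ∑ i : Fin m, mu i • a i) := by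
  intro x
  constructor
  · rw [hcover, Set.mem_iUnion₂]
    rintro ⟨s, hs, hxs⟩
    rw [hconeOf] at hxs
    obtain ⟨c, hc₀, hc, hx⟩ := hxs
    obtain ⟨b, e, he, hb⟩ := hsmooth s hs
    exact exists_nat_coeffs_of_eq_sum_smul a b s e he hb c hc₀ hc x hx
  · rintro ⟨μ, rfl⟩
    rw [hconeOf]
    exact ⟨fun i => μ i, fun i => Nat.cast_nonneg _, fun i hi => absurd (Finset.mem_univ i) hi,
      by ext j; simp [Finset.sum_apply]⟩
end

section
/- Suppose vectors a₁,…,a_m ∈ ℝ^n positively span ℝ^n, i.e. every vector in ℝ^n is a nonnegative real combination of the a_i (equivalently, the cone they generate is all of ℝ^n). If additionally the a_i lie in ℚ^n, then there exist strictly positive integers λ₁,…,λ_m with ∑_{i=1}^m λ_i a_i = 0. -/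
/-!
Writing `-∑ aᵢ` as a nonnegative combination gives a real relation `∑ μᵢ aᵢ = 0` with all
`μᵢ ≥ 1`. Relations are the left kernel of the rational matrix `M` with rows `aᵢ`, and rational
relations are dense among real ones: if `M C M = M`, the rational matrix `P = 1 - M C` sends
every vector to a relation and fixes every real relation. So for rational `q` close to `μ`, the
rational relation `q P` is close to `μ`, hence strictly positive; clearing denominators makes
it integral.
-/

open Matrix

theorem LinearMap.exists_comp_comp_eq_self {K V W : Type*} [Field K] [AddCommGroup V]
    [Module K V] [AddCommGroup W] [Module K W] (f : V →ₗ[K] W) :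
    ∃ g : W →ₗ[K] V, f ∘ₗ g ∘ₗ f = f := by
  obtain ⟨s, hs⟩ := f.rangeRestrict.exists_rightInverse_of_surjective f.range_rangeRestrict
  obtain ⟨π, hπ⟩ :=
    (LinearMap.range f).subtype.exists_leftInverse_of_injective (LinearMap.range f).ker_subtype
  refine ⟨s ∘ₗ π, LinearMap.ext fun x => ?_⟩
  have hπx : π (f x) = f.rangeRestrict x := LinearMap.congr_fun hπ (f.rangeRestrict x)
  have hsx : f.rangeRestrict (s (f.rangeRestrict x)) = f.rangeRestrict x :=
    LinearMap.congr_fun hs (f.rangeRestrict x)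
  simpa [hπx] using congrArg Subtype.val hsx

theorem Matrix.exists_mul_mul_eq_self {ι κ K : Type*} [Fintype ι] [Fintype κ] [Field K]
    (M : Matrix ι κ K) : ∃ C : Matrix κ ι K, M * C * M = M := by
  classical
  obtain ⟨g, hg⟩ := (toLin' M).exists_comp_comp_eq_self
  refine ⟨LinearMap.toMatrix' g, toLin'.injective ?_⟩
  rw [toLin'_mul, toLin'_mul, toLin'_toMatrix', LinearMap.comp_assoc, hg]

theorem Matrix.mem_closure_ratCast_of_vecMul_eq_zero {ι κ : Type*} [Fintype ι] [Fintype κ]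
    (M : Matrix ι κ ℚ) {μ : ι → ℝ} (hμ : μ ᵥ* M.map (↑) = 0) :
    μ ∈ closure ((fun ν : ι → ℚ => fun i => (ν i : ℝ)) '' {ν | ν ᵥ* M = 0}) := by
  classical
  obtain ⟨C, hC⟩ := M.exists_mul_mul_eq_self
  have hPM : (1 - M * C) * M = 0 := by rw [Matrix.sub_mul, Matrix.one_mul, hC, sub_self]
  have hPr : (1 - M * C).map (Rat.castHom ℝ) =
      1 - M.map (Rat.castHom ℝ) * C.map (Rat.castHom ℝ) := by
    rw [← RingHom.mapMatrix_apply, map_sub, map_one, RingHom.mapMatrix_apply, Matrix.map_mul]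
  set f : (ι → ℝ) → (ι → ℝ) := fun x => x ᵥ* (1 - M * C).map (Rat.castHom ℝ)
  have hfμ : f μ = μ := by
    simp only [f, hPr, vecMul_sub, vecMul_one, ← vecMul_vecMul]
    simp [hμ]
  have hf : Continuous f := continuous_id.matrix_vecMul continuous_const
  have hdense : DenseRange (fun ν : ι → ℚ => fun i => (ν i : ℝ)) :=
    DenseRange.piMap fun _ => Rat.denseRange_cast
  have hμf : μ ∈ closure (f '' Set.range fun ν : ι → ℚ => fun i => (ν i : ℝ)) :=
    hfμ ▸ image_closure_subset_closure_image hf ⟨μ, hdense.closure_range ▸ trivial, rfl⟩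
  refine closure_mono ?_ hμf
  rintro _ ⟨_, ⟨q, rfl⟩, rfl⟩
  refine ⟨q ᵥ* (1 - M * C), ?_, funext (RingHom.map_vecMul (Rat.castHom ℝ) (1 - M * C) q)⟩
  change q ᵥ* (1 - M * C) ᵥ* M = 0
  rw [vecMul_vecMul, hPM, vecMul_zero]

theorem Rat.exists_nat_mul_eq_intCast {ι : Type*} [Fintype ι] (ν : ι → ℚ) :
    ∃ d : ℕ, 0 < d ∧ ∃ z : ι → ℤ, ∀ i, (z i : ℚ) = d * ν i := by
  refine ⟨∏ i, (ν i).den, Finset.prod_pos fun i _ => (ν i).pos,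
    fun i => ((∏ j, (ν j).den) / (ν i).den : ℕ) * (ν i).num, fun i => ?_⟩
  have hden : ((ν i).den : ℚ) ≠ 0 := Nat.cast_ne_zero.mpr (ν i).den_nz
  rw [Int.cast_mul, Int.cast_natCast, ← Rat.mul_den_eq_num,
    Nat.cast_div (Finset.dvd_prod_of_mem _ (Finset.mem_univ i)) hden]
  field_simp

/-- if rational vectors `a₁,…,a_m` positively span `ℝ^n`, then there is a
strictly positive integral relation `∑ λᵢ aᵢ = 0`. -/
theorem exists_positive_integral_relation (n m : ℕ)
    (a : Fin m → (Fin n → ℚ))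
    (hspan : ∀ v : Fin n → ℝ, ∃ lam : Fin m → ℝ, (∀ i, 0 ≤ lam i) ∧
      v = ∑ i : Fin m, lam i • (fun j => (a i j : ℝ))) :
    ∃ lam : Fin m → ℤ, (∀ i, 0 < lam i) ∧ ∑ i : Fin m, lam i • a i = 0 := by
  obtain ⟨lam, hlam, hrel⟩ := hspan (-∑ i, fun j => (a i j : ℝ))
  have hμ : (1 + lam) ᵥ* (Matrix.of a).map (↑) = 0 :=
    calc (1 + lam) ᵥ* (Matrix.of a).map (↑)
        = ∑ i, (1 + lam i) • fun j => (a i j : ℝ) := vecMul_eq_sum _ _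
      _ = (∑ i, fun j => (a i j : ℝ)) + ∑ i, lam i • fun j => (a i j : ℝ) := by
        simp only [add_smul, one_smul, Finset.sum_add_distrib]
      _ = 0 := by rw [← hrel, add_neg_cancel]
  have hμpos : 1 + lam ∈ Set.univ.pi fun _ => Set.Ioi 0 := fun i _ =>
    add_pos_of_pos_of_nonneg one_pos (hlam i)
  obtain ⟨_, hνpos, ν, hν, rfl⟩ :=
    mem_closure_iff.mp ((Matrix.of a).mem_closure_ratCast_of_vecMul_eq_zero hμ) _
      (isOpen_set_pi Set.finite_univ fun _ _ => isOpen_Ioi) hμpos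
  obtain ⟨d, hd, z, hz⟩ := Rat.exists_nat_mul_eq_intCast ν
  refine ⟨z, fun i => ?_, ?_⟩
  · have hνi : (0 : ℝ) < ν i := hνpos i (Set.mem_univ i)
    have hzi : (0 : ℚ) < z i := hz i ▸ mul_pos (Nat.cast_pos.mpr hd) (Rat.cast_pos.mp hνi)
    exact_mod_cast hzi
  · calc ∑ i, z i • a i = ∑ i, (d : ℚ) • ν i • a i := by
          refine Finset.sum_congr rfl fun i _ => ?_
          rw [← Int.cast_smul_eq_zsmul ℚ, hz, mul_smul]
      _ = (d : ℚ) • (ν ᵥ* Matrix.of a) := by rw [vecMul_eq_sum, Finset.smul_sum]; rfl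
      _ = 0 := by rw [hν, smul_zero]
end
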